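/- arXiv:1412.5746 — 5 statements merged into one kernel-verified Lean document; each statement's English description precedes it below -/
import Mathlib

section
/- Let A be a complex Banach algebra and let K, L ∈ A. Then for every r ≥ 0 one has ‖exp(rL)·K − K·exp(rL)‖ ≤ r·exp(r‖L‖)·‖[K,L]‖, where [K,L] = KL − LK. -/
/-!
The path `g t = exp (t • L) * K * exp ((r - t) • L)` runs from `g 0 = K * exp (r • L)` to
`g r = exp (r • L) * K`, and its derivative `exp (t • L) * [L, K] * exp ((r - t) • L)` has norm at
most `Real.exp (r * ‖L‖) * ‖[K, L]‖` on `[0, r]`; the mean value inequality gives the bound.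
-/

open NormedSpace

section ExpBounds

variable {A : Type*} [NormedRing A]

theorem norm_pow_mul_le (a y : A) (n : ℕ) : ‖a ^ n * y‖ ≤ ‖a‖ ^ n * ‖y‖ := by
  induction n with
  | zero => simp
  | succ n ih =>
    calc ‖a ^ (n + 1) * y‖ = ‖a * (a ^ n * y)‖ := by rw [pow_succ', mul_assoc]
      _ ≤ ‖a‖ * (‖a‖ ^ n * ‖y‖) := norm_mul_le_of_le le_rfl ih
      _ = ‖a‖ ^ (n + 1) * ‖y‖ := by ring

variable [CompleteSpace A]

/- Stated for `exp a * y` rather than `exp a`: without `NormOneClass`, `‖1‖` may exceed `1`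
and `‖exp a‖ ≤ Real.exp ‖a‖` can fail. -/
theorem norm_exp_mul_le (𝕂 : Type*) [RCLike 𝕂] [NormedAlgebra 𝕂 A] (a y : A) :
    ‖exp a * y‖ ≤ Real.exp ‖a‖ * ‖y‖ := by
  have hA : HasSum (fun n : ℕ => ((n.factorial : 𝕂)⁻¹ • a ^ n) * y) (exp a * y) :=
    (exp_series_hasSum_exp' a).mul_right y
  have hR : HasSum (fun n : ℕ => ‖a‖ ^ n / n.factorial * ‖y‖) (Real.exp ‖a‖ * ‖y‖) := by
    rw [Real.exp_eq_exp_ℝ]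
    exact (expSeries_div_hasSum_exp ‖a‖).mul_right ‖y‖
  refine hA.norm_le_of_bounded hR fun n => ?_
  calc ‖(n.factorial : 𝕂)⁻¹ • a ^ n * y‖ = (n.factorial : ℝ)⁻¹ * ‖a ^ n * y‖ := by
        rw [smul_mul_assoc, norm_smul, norm_inv, RCLike.norm_natCast]
    _ ≤ (n.factorial : ℝ)⁻¹ * (‖a‖ ^ n * ‖y‖) := by gcongr; exact norm_pow_mul_le a y n
    _ = ‖a‖ ^ n / n.factorial * ‖y‖ := by ring

theorem norm_mul_exp_le (𝕂 : Type*) [RCLike 𝕂] [NormedAlgebra 𝕂 A] (y a : A) :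
    ‖y * exp a‖ ≤ ‖y‖ * Real.exp ‖a‖ := by
  have h := norm_exp_mul_le 𝕂 (MulOpposite.op a) (MulOpposite.op y)
  rwa [exp_op, ← MulOpposite.op_mul, MulOpposite.norm_op, MulOpposite.norm_op,
    MulOpposite.norm_op, mul_comm (Real.exp _)] at h

theorem norm_exp_mul_mul_exp_le (𝕂 : Type*) [RCLike 𝕂] [NormedAlgebra 𝕂 A] (a y b : A) :
    ‖exp a * y * exp b‖ ≤ Real.exp (‖a‖ + ‖b‖) * ‖y‖ := by
  calc ‖exp a * y * exp b‖ ≤ Real.exp ‖a‖ * (‖y‖ * Real.exp ‖b‖) := by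
        rw [mul_assoc]
        exact (norm_exp_mul_le 𝕂 _ _).trans
          (mul_le_mul_of_nonneg_left (norm_mul_exp_le 𝕂 _ _) (Real.exp_pos _).le)
    _ = Real.exp (‖a‖ + ‖b‖) * ‖y‖ := by rw [Real.exp_add]; ring

end ExpBounds

theorem hasDerivAt_exp_smul_mul_mul_exp_smul {𝕂 A : Type*} [RCLike 𝕂] [NormedRing A]
    [NormedAlgebra 𝕂 A] [CompleteSpace A] (K L : A) (r t : 𝕂) :
    HasDerivAt (fun u : 𝕂 => exp (u • L) * K * exp ((r - u) • L))
      (exp (t • L) * (L * K - K * L) * exp ((r - t) • L)) t := by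
  have hsub : HasDerivAt (fun u : 𝕂 => exp ((r - u) • L)) (-(L * exp ((r - t) • L))) t := by
    simpa [Function.comp_def] using
      (hasDerivAt_exp_smul_const' L (r - t)).scomp t ((hasDerivAt_id t).const_sub r)
  exact (((hasDerivAt_exp_smul_const L t).mul_const K).mul hsub).congr_deriv (by noncomm_ring)

/-- **Commutator bound with an exponential** (Banach-algebra form of Lemma 2).
For elements `K, L` of a complex Banach algebra and every `r ≥ 0`,
`‖exp(rL)·K − K·exp(rL)‖ ≤ r·exp(r‖L‖)·‖[K,L]‖` where `[K,L] = KL − LK`. -/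
theorem commutator_exp_bound {A : Type*} [NormedRing A] [NormedAlgebra ℂ A]
    [CompleteSpace A] (K L : A) :
    ∀ r : ℝ, 0 ≤ r →
      ‖exp (r • L) * K - K * exp (r • L)‖ ≤
        r * Real.exp (r * ‖L‖) * ‖K * L - L * K‖ := by
  intro r hr
  have hbound : ∀ s ∈ Set.Ico 0 r,
      ‖exp (s • L) * (L * K - K * L) * exp ((r - s) • L)‖ ≤
        Real.exp (r * ‖L‖) * ‖K * L - L * K‖ := by
    rintro s ⟨hs0, hsr⟩
    have hnorm : ‖s • L‖ + ‖(r - s) • L‖ = r * ‖L‖ := by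
      rw [norm_smul, norm_smul, Real.norm_of_nonneg hs0,
        Real.norm_of_nonneg (sub_nonneg.2 hsr.le)]
      ring
    simpa [hnorm, norm_sub_rev] using
      norm_exp_mul_mul_exp_le ℝ (s • L) (L * K - K * L) ((r - s) • L)
  have hmvt := norm_image_sub_le_of_norm_deriv_le_segment'
    (fun s _ => (hasDerivAt_exp_smul_mul_mul_exp_smul K L r s).hasDerivWithinAt) hbound
    r (Set.right_mem_Icc.2 hr)
  simpa [exp_zero, mul_comm r, mul_assoc] using hmvt
end

section
/- Let A be a complex Banach algebra, let K, L ∈ A, let t ≥ 0, and assume that ‖exp(sK)‖ ≤ 1, ‖exp(sL)‖ ≤ 1 and ‖exp(s(K+L))‖ ≤ 1 for all s ∈ [0,t]. If moreover t·‖K‖ ≤ 1, then ‖exp(t(K+L)) − exp(tK)·exp(tL)‖ ≤ t²·‖[K,L]‖. -/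
open NormedSpace Set

/-! Duhamel interpolation: `F s = exp((t-s)(K+L)) exp(sK) exp(sL)` runs from `exp(t(K+L))` to
`exp(tK) exp(tL)`, and `F' s = exp((t-s)(K+L)) [exp(sK), L] exp(sL)`, in which the outer factors
are contractions. The same interpolation `u ↦ exp((s-u)K) L exp(uK)` gives
`‖[exp(sK), L]‖ ≤ s ‖[K, L]‖`, so the mean value inequality bounds `‖F t - F 0‖` by `t · t ‖[K, L]‖`. -/

theorem norm_sub_le_mul_of_hasDerivAt {E : Type*} [NormedAddCommGroup E] [NormedSpace ℝ E]
    {f f' : ℝ → E} {C t : ℝ} (ht : 0 ≤ t) (hf : ∀ u ∈ Icc 0 t, HasDerivAt f (f' u) u)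
    (bound : ∀ u ∈ Icc 0 t, ‖f' u‖ ≤ C) : ‖f t - f 0‖ ≤ C * t := by
  simpa using norm_image_sub_le_of_norm_deriv_le_segment'
    (fun u hu => (hf u hu).hasDerivWithinAt) (fun u hu => bound u (Ico_subset_Icc_self hu))
    t (right_mem_Icc.2 ht)

theorem norm_mul_mul_le_of_norm_le_one {R : Type*} [NonUnitalSeminormedRing R] {a b : R} (x : R)
    (ha : ‖a‖ ≤ 1) (hb : ‖b‖ ≤ 1) : ‖a * x * b‖ ≤ ‖x‖ :=
  calc ‖a * x * b‖ ≤ ‖a‖ * ‖x‖ * ‖b‖ := norm_mul₃_le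
    _ ≤ 1 * ‖x‖ * 1 := by gcongr
    _ = ‖x‖ := by ring

section

variable {A : Type*} [NormedRing A] [NormedAlgebra ℝ A] [CompleteSpace A]

theorem hasDerivAt_exp_sub_smul (X : A) (c u : ℝ) :
    HasDerivAt (fun v : ℝ => exp ((c - v) • X)) (-(exp ((c - u) • X) * X)) u := by
  simpa [Function.comp_def] using
    (hasDerivAt_exp_smul_const X (c - u)).scomp u ((hasDerivAt_id u).const_sub c)

theorem norm_exp_smul_mul_sub_mul_exp_smul_le (K L : A) {s : ℝ} (hs : 0 ≤ s)
    (hK : ∀ u ∈ Icc 0 s, ‖exp (u • K)‖ ≤ 1) :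
    ‖exp (s • K) * L - L * exp (s • K)‖ ≤ s * ‖K * L - L * K‖ := by
  have hderiv : ∀ u ∈ Icc 0 s, HasDerivAt (fun u => exp ((s - u) • K) * L * exp (u • K))
      (exp ((s - u) • K) * (L * K - K * L) * exp (u • K)) u := by
    intro u _
    refine (((hasDerivAt_exp_sub_smul K s u).mul_const L).mul
      (hasDerivAt_exp_smul_const' K u)).congr_deriv ?_
    noncomm_ring
  have bound : ∀ u ∈ Icc 0 s,
      ‖exp ((s - u) • K) * (L * K - K * L) * exp (u • K)‖ ≤ ‖K * L - L * K‖ := by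
    intro u ⟨hu0, hus⟩
    rw [← norm_neg (K * L - L * K), neg_sub]
    exact norm_mul_mul_le_of_norm_le_one _ (hK _ ⟨by linarith, by linarith⟩) (hK u ⟨hu0, hus⟩)
  simpa [norm_sub_rev, mul_comm s] using norm_sub_le_mul_of_hasDerivAt hs hderiv bound

theorem hasDerivAt_exp_sub_smul_add_mul_exp_smul_mul_exp_smul (K L : A) (t s : ℝ) :
    HasDerivAt (fun s => exp ((t - s) • (K + L)) * (exp (s • K) * exp (s • L)))
      (exp ((t - s) • (K + L)) * (exp (s • K) * L - L * exp (s • K)) * exp (s • L)) s := by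
  refine ((hasDerivAt_exp_sub_smul (K + L) t s).mul
    ((hasDerivAt_exp_smul_const' K s).mul (hasDerivAt_exp_smul_const' L s))).congr_deriv ?_
  simp only [Pi.mul_apply]
  noncomm_ring

end

theorem trotter_first_order_bound_general {A : Type*} [NormedRing A] [NormedAlgebra ℂ A]
    [CompleteSpace A] (K L : A) (t : ℝ) (ht : 0 ≤ t)
    (hK : ∀ s ∈ Set.Icc (0:ℝ) t, ‖exp (s • K)‖ ≤ 1)
    (hL : ∀ s ∈ Set.Icc (0:ℝ) t, ‖exp (s • L)‖ ≤ 1)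
    (hKL : ∀ s ∈ Set.Icc (0:ℝ) t, ‖exp (s • (K + L))‖ ≤ 1) :
    ‖exp (t • (K + L)) - exp (t • K) * exp (t • L)‖ ≤
      t ^ 2 * ‖K * L - L * K‖ := by
  have bound : ∀ s ∈ Icc 0 t, ‖exp ((t - s) • (K + L)) *
      (exp (s • K) * L - L * exp (s • K)) * exp (s • L)‖ ≤ t * ‖K * L - L * K‖ := by
    intro s ⟨hs0, hst⟩
    calc _ ≤ ‖exp (s • K) * L - L * exp (s • K)‖ :=
          norm_mul_mul_le_of_norm_le_one _ (hKL _ ⟨by linarith, by linarith⟩) (hL s ⟨hs0, hst⟩)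
      _ ≤ s * ‖K * L - L * K‖ := norm_exp_smul_mul_sub_mul_exp_smul_le K L hs0
          fun u hu => hK u ⟨hu.1, hu.2.trans hst⟩
      _ ≤ t * ‖K * L - L * K‖ := by gcongr
  have h := norm_sub_le_mul_of_hasDerivAt ht
    (fun s _ => hasDerivAt_exp_sub_smul_add_mul_exp_smul_mul_exp_smul K L t s) bound
  simpa [norm_sub_rev, sq, mul_assoc, mul_comm t] using h

/-- **Dissipative first-order Trotter–Suzuki product formula** (Lemma 3).
If `K, L` are elements of a complex Banach algebra whose exponentials
`exp(sK)`, `exp(sL)`, `exp(s(K+L))` are contractions for all `s ∈ [0,t]`, and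
`t·‖K‖ ≤ 1`, then `‖exp(t(K+L)) − exp(tK)·exp(tL)‖ ≤ t²·‖[K,L]‖`. -/
theorem trotter_first_order_bound {A : Type*} [NormedRing A] [NormedAlgebra ℂ A]
    [CompleteSpace A] (K L : A) (t : ℝ) (ht : 0 ≤ t)
    (hK : ∀ s ∈ Set.Icc (0:ℝ) t, ‖exp (s • K)‖ ≤ 1)
    (hL : ∀ s ∈ Set.Icc (0:ℝ) t, ‖exp (s • L)‖ ≤ 1)
    (hKL : ∀ s ∈ Set.Icc (0:ℝ) t, ‖exp (s • (K + L))‖ ≤ 1)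
    (htK : t * ‖K‖ ≤ 1) :
    ‖exp (t • (K + L)) - exp (t • K) * exp (t • L)‖ ≤
      t ^ 2 * ‖K * L - L * K‖ :=
  trotter_first_order_bound_general K L t ht hK hL hKL
end

section
/- Let A be a complex Banach algebra, let K, L ∈ A, let t ≥ 0, and assume that ‖exp(sK)‖ ≤ 1, ‖exp(sL)‖ ≤ 1 and ‖exp(s(K+L))‖ ≤ 1 for all s ∈ [0,t]. If moreover t·(‖L‖ + ‖K‖/2) ≤ 1, then ‖exp(t(K+L)) − exp((t/2)K)·exp(tL)·exp((t/2)K)‖ ≤ (t³/3)·‖[K,L]‖·(‖L‖ + ‖K‖/2). -/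
/-! With `H = 2X + Y` and `P r = e^{rX} e^{rY} e^{rX}`, the path `r ↦ e^{(t - r)H} P r` runs
from `e^{tH}` to `P t`, and its derivative is
`e^{(t - r)H} (⁅e^{rX}, Y⁆ e^{rY} e^{rX} + e^{rX} ⁅e^{rY}, X⁆ e^{rX})`.
To first order in `r` the two commutators are `r⁅X, Y⁆` and `-r⁅X, Y⁆`, so they cancel and the
derivative is `O(r²)`, with explicit constants because every exponential is a contraction;
integrating `r²` gives the `t³/3`. The theorem is the case `X = K/2`, `Y = L`. -/

open NormedSpace Set

theorem norm_sub_le_of_hasDerivAt_of_norm_le_mul_pow {E : Type*} [NormedAddCommGroup E]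
    [NormedSpace ℝ E] {f f' : ℝ → E} {c t : ℝ} (n : ℕ) (ht : 0 ≤ t)
    (hf : ∀ x ∈ Icc 0 t, HasDerivAt f (f' x) x) (bound : ∀ x ∈ Ico 0 t, ‖f' x‖ ≤ c * x ^ n) :
    ‖f t - f 0‖ ≤ c * t ^ (n + 1) / (n + 1) := by
  have hB (x : ℝ) : HasDerivAt (fun x => c * x ^ (n + 1) / (n + 1)) (c * x ^ n) x := by
    refine (((hasDerivAt_pow (n + 1) x).const_mul c).div_const ((n : ℝ) + 1)).congr_deriv ?_
    rw [Nat.add_sub_cancel]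
    push_cast
    field_simp
  exact image_norm_le_of_norm_deriv_right_le_deriv_boundary (f := fun x => f x - f 0)
    (fun x hx => ((hf x hx).continuousAt.sub continuousAt_const).continuousWithinAt)
    (fun x hx => ((hf x (Ico_subset_Icc_self hx)).sub_const (f 0)).hasDerivWithinAt)
    (by simp) hB bound ⟨ht, le_rfl⟩

section NormedRing

variable {A : Type*} [NormedRing A]

theorem norm_mul_le_of_norm_le_one_left {U Z : A} (hU : ‖U‖ ≤ 1) : ‖U * Z‖ ≤ ‖Z‖ :=
  (norm_mul_le _ _).trans (mul_le_of_le_one_left (norm_nonneg _) hU)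

theorem norm_mul_le_of_norm_le_one_right {Z V : A} (hV : ‖V‖ ≤ 1) : ‖Z * V‖ ≤ ‖Z‖ :=
  (norm_mul_le _ _).trans (mul_le_of_le_one_right (norm_nonneg _) hV)

theorem norm_mul_mul_sub_le_of_norm_le_one {U Z V : A} (hV : ‖V‖ ≤ 1) :
    ‖U * Z * V - Z‖ ≤ (‖U - 1‖ + ‖V - 1‖) * ‖Z‖ := by
  rw [show U * Z * V - Z = (U - 1) * Z * V + Z * (V - 1) by noncomm_ring, add_mul]
  exact (norm_add_le _ _).trans (add_le_add
    ((norm_mul_le_of_norm_le_one_right hV).trans (norm_mul_le _ _))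
    ((norm_mul_le _ _).trans_eq (mul_comm _ _)))

end NormedRing

section ContractionSemigroup

variable {A : Type*} [NormedRing A] [NormedAlgebra ℝ A] [CompleteSpace A]

theorem norm_exp_smul_sub_one_le {B : A} {s : ℝ} (hs : 0 ≤ s)
    (hB : ∀ u ∈ Icc 0 s, ‖exp (u • B)‖ ≤ 1) : ‖exp (s • B) - 1‖ ≤ s * ‖B‖ := by
  have h := norm_image_sub_le_of_norm_deriv_le_segment' (f := fun u : ℝ => exp (u • B))
    (fun u _ => (hasDerivAt_exp_smul_const B u).hasDerivWithinAt)
    (fun u hu => norm_mul_le_of_norm_le_one_left (hB u (Ico_subset_Icc_self hu))) s ⟨hs, le_rfl⟩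
  simpa [mul_comm] using h

theorem norm_lie_exp_smul_sub_smul_lie_le {B D : A} {s : ℝ} (hs : 0 ≤ s)
    (hB : ∀ u ∈ Icc 0 s, ‖exp (u • B)‖ ≤ 1) :
    ‖⁅exp (s • B), D⁆ - s • ⁅B, D⁆‖ ≤ s ^ 2 * ‖B‖ * ‖⁅B, D⁆‖ := by
  have hderiv (u : ℝ) :
      HasDerivAt (fun u : ℝ => exp (u • B) * D * exp ((s - u) • B) - u • ⁅B, D⁆)
        (exp (u • B) * ⁅B, D⁆ * exp ((s - u) • B) - ⁅B, D⁆) u := by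
    refine ((((hasDerivAt_exp_smul_const B u).mul_const D).mul
      ((hasDerivAt_exp_smul_const' B (s - u)).comp_const_sub
        (f := fun u : ℝ => exp (u • B)) s u)).sub
      ((hasDerivAt_id u).smul_const ⁅B, D⁆)).congr_deriv ?_
    rw [Ring.lie_def, one_smul]
    noncomm_ring
  have hbound : ∀ u ∈ Ico 0 s, ‖exp (u • B) * ⁅B, D⁆ * exp ((s - u) • B) - ⁅B, D⁆‖
      ≤ s * ‖B‖ * ‖⁅B, D⁆‖ := by
    rintro u ⟨hu, hus⟩
    have hexp_u := norm_exp_smul_sub_one_le hu fun v hv => hB v ⟨hv.1, hv.2.trans hus.le⟩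
    have hexp_su := norm_exp_smul_sub_one_le (sub_nonneg.2 hus.le) fun v hv =>
      hB v ⟨hv.1, hv.2.trans (by linarith)⟩
    calc _ ≤ (‖exp (u • B) - 1‖ + ‖exp ((s - u) • B) - 1‖) * ‖⁅B, D⁆‖ :=
          norm_mul_mul_sub_le_of_norm_le_one (hB _ ⟨sub_nonneg.2 hus.le, by linarith⟩)
      _ ≤ (u * ‖B‖ + (s - u) * ‖B‖) * ‖⁅B, D⁆‖ := by gcongr
      _ = s * ‖B‖ * ‖⁅B, D⁆‖ := by ring
  have h := norm_image_sub_le_of_norm_deriv_le_segment' (fun u _ => (hderiv u).hasDerivWithinAt)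
    hbound s ⟨hs, le_rfl⟩
  simp only [sub_self, sub_zero, zero_smul, exp_zero, mul_one] at h
  calc ‖⁅exp (s • B), D⁆ - s • ⁅B, D⁆‖
      = ‖exp (s • B) * D - s • ⁅B, D⁆ - 1 * D * exp (s • B)‖ := by
        rw [Ring.lie_def (exp _)]
        congr 1
        noncomm_ring
    _ ≤ s * ‖B‖ * ‖⁅B, D⁆‖ * s := h
    _ = s ^ 2 * ‖B‖ * ‖⁅B, D⁆‖ := by ring

theorem hasDerivAt_exp_smul_mul_symmetric_product (X Y : A) (t r : ℝ) :
    HasDerivAt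
      (fun u : ℝ => exp ((t - u) • ((2 : ℝ) • X + Y)) * (exp (u • X) * exp (u • Y) * exp (u • X)))
      (exp ((t - r) • ((2 : ℝ) • X + Y)) *
        (⁅exp (r • X), Y⁆ * exp (r • Y) * exp (r • X) +
          exp (r • X) * ⁅exp (r • Y), X⁆ * exp (r • X))) r := by
  refine (((hasDerivAt_exp_smul_const _ (t - r)).comp_const_sub
      (f := fun u : ℝ => exp (u • ((2 : ℝ) • X + Y))) t r).mul
    (((hasDerivAt_exp_smul_const' X r).mul (hasDerivAt_exp_smul_const' Y r)).mul
      (hasDerivAt_exp_smul_const' X r))).congr_deriv ?_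
  have hswap (z : A) : X * (exp (r • X) * z) = exp (r • X) * (X * z) := by
    rw [← mul_assoc, (((Commute.refl X).smul_right r).exp_right).eq, mul_assoc]
  simp only [Pi.mul_apply, two_smul, Ring.lie_def, mul_add, add_mul, sub_mul, mul_sub, neg_mul,
    mul_assoc, hswap]
  abel

theorem norm_lie_exp_smul_symmetric_le {X Y : A} {r : ℝ} (hr : 0 ≤ r)
    (hX : ∀ u ∈ Icc 0 r, ‖exp (u • X)‖ ≤ 1) (hY : ∀ u ∈ Icc 0 r, ‖exp (u • Y)‖ ≤ 1) :
    ‖⁅exp (r • X), Y⁆ * exp (r • Y) * exp (r • X) + exp (r • X) * ⁅exp (r • Y), X⁆ * exp (r • X)‖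
      ≤ 2 * ‖⁅X, Y⁆‖ * (‖X‖ + ‖Y‖) * r ^ 2 := by
  have hXr := hX r ⟨hr, le_rfl⟩
  have hYr := hY r ⟨hr, le_rfl⟩
  have hlie : ‖⁅X, Y⁆ * exp (r • Y) - exp (r • X) * ⁅X, Y⁆‖ ≤ r * (‖X‖ + ‖Y‖) * ‖⁅X, Y⁆‖ := by
    rw [show ⁅X, Y⁆ * exp (r • Y) - exp (r • X) * ⁅X, Y⁆
        = ⁅X, Y⁆ * (exp (r • Y) - 1) - (exp (r • X) - 1) * ⁅X, Y⁆ by noncomm_ring]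
    calc _ ≤ ‖⁅X, Y⁆‖ * ‖exp (r • Y) - 1‖ + ‖exp (r • X) - 1‖ * ‖⁅X, Y⁆‖ :=
          (norm_sub_le _ _).trans (add_le_add (norm_mul_le _ _) (norm_mul_le _ _))
      _ ≤ ‖⁅X, Y⁆‖ * (r * ‖Y‖) + r * ‖X‖ * ‖⁅X, Y⁆‖ := by
          gcongr
          exacts [norm_exp_smul_sub_one_le hr hY, norm_exp_smul_sub_one_le hr hX]
      _ = r * (‖X‖ + ‖Y‖) * ‖⁅X, Y⁆‖ := by ring
  have hsplit :
      ⁅exp (r • X), Y⁆ * exp (r • Y) * exp (r • X) + exp (r • X) * ⁅exp (r • Y), X⁆ * exp (r • X)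
        = (⁅exp (r • X), Y⁆ - r • ⁅X, Y⁆) * (exp (r • Y) * exp (r • X))
          + exp (r • X) * (⁅exp (r • Y), X⁆ - r • ⁅Y, X⁆) * exp (r • X)
          + r • ((⁅X, Y⁆ * exp (r • Y) - exp (r • X) * ⁅X, Y⁆) * exp (r • X)) := by
    simp only [Ring.lie_def, smul_sub, sub_mul, mul_sub, smul_mul_assoc, mul_smul_comm, mul_assoc]
    abel
  rw [hsplit]
  calc _ ≤ ‖⁅exp (r • X), Y⁆ - r • ⁅X, Y⁆‖ + ‖⁅exp (r • Y), X⁆ - r • ⁅Y, X⁆‖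
          + r * ‖⁅X, Y⁆ * exp (r • Y) - exp (r • X) * ⁅X, Y⁆‖ := by
        refine (norm_add₃_le).trans (add_le_add_three ?_ ?_ ?_)
        · exact norm_mul_le_of_norm_le_one_right
            ((norm_mul_le _ _).trans (mul_le_one₀ hYr (norm_nonneg _) hXr))
        · exact (norm_mul_le_of_norm_le_one_right hXr).trans (norm_mul_le_of_norm_le_one_left hXr)
        · rw [norm_smul, Real.norm_of_nonneg hr]
          exact mul_le_mul_of_nonneg_left (norm_mul_le_of_norm_le_one_right hXr) hr
    _ ≤ r ^ 2 * ‖X‖ * ‖⁅X, Y⁆‖ + r ^ 2 * ‖Y‖ * ‖⁅X, Y⁆‖ + r * (r * (‖X‖ + ‖Y‖) * ‖⁅X, Y⁆‖) := by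
        gcongr
        · exact norm_lie_exp_smul_sub_smul_lie_le hr hX
        · exact (norm_lie_exp_smul_sub_smul_lie_le hr hY).trans_eq
            (by rw [Ring.lie_def Y, Ring.lie_def X, norm_sub_rev])
    _ = 2 * ‖⁅X, Y⁆‖ * (‖X‖ + ‖Y‖) * r ^ 2 := by ring

theorem norm_exp_smul_sub_symmetric_product_le {X Y : A} {t : ℝ} (ht : 0 ≤ t)
    (hX : ∀ s ∈ Icc 0 t, ‖exp (s • X)‖ ≤ 1) (hY : ∀ s ∈ Icc 0 t, ‖exp (s • Y)‖ ≤ 1)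
    (hXY : ∀ s ∈ Icc 0 t, ‖exp (s • ((2 : ℝ) • X + Y))‖ ≤ 1) :
    ‖exp (t • ((2 : ℝ) • X + Y)) - exp (t • X) * exp (t • Y) * exp (t • X)‖
      ≤ 2 * ‖⁅X, Y⁆‖ * (‖X‖ + ‖Y‖) * t ^ 3 / 3 := by
  have h := norm_sub_le_of_hasDerivAt_of_norm_le_mul_pow 2 ht
    (fun r _ => hasDerivAt_exp_smul_mul_symmetric_product X Y t r) fun r ⟨hr, hrt⟩ =>
      (norm_mul_le_of_norm_le_one_left (hXY (t - r) ⟨by linarith, by linarith⟩)).trans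
        (norm_lie_exp_smul_symmetric_le hr (fun u hu => hX u ⟨hu.1, hu.2.trans hrt.le⟩)
          fun u hu => hY u ⟨hu.1, hu.2.trans hrt.le⟩)
  simp only [sub_self, sub_zero, zero_smul, exp_zero, one_mul, mul_one] at h
  rw [norm_sub_rev]
  convert h using 2
  norm_num

end ContractionSemigroup

theorem trotter_second_order_bound_general {A : Type*} [NormedRing A] [NormedAlgebra ℂ A]
    [CompleteSpace A] (K L : A) (t : ℝ) (ht : 0 ≤ t)
    (hK : ∀ s ∈ Set.Icc (0:ℝ) t, ‖exp (s • K)‖ ≤ 1)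
    (hL : ∀ s ∈ Set.Icc (0:ℝ) t, ‖exp (s • L)‖ ≤ 1)
    (hKL : ∀ s ∈ Set.Icc (0:ℝ) t, ‖exp (s • (K + L))‖ ≤ 1) :
    ‖exp (t • (K + L)) - exp ((t / 2) • K) * exp (t • L) * exp ((t / 2) • K)‖ ≤
      t ^ 3 / 3 * ‖K * L - L * K‖ * (‖L‖ + ‖K‖ / 2) := by
  have hhalf (s : ℝ) : s • (2⁻¹ : ℝ) • K = (s / 2) • K := by rw [smul_smul, div_eq_mul_inv]
  have hsum : (2 : ℝ) • (2⁻¹ : ℝ) • K + L = K + L := by rw [smul_inv_smul₀ two_ne_zero]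
  have h := norm_exp_smul_sub_symmetric_product_le (X := (2⁻¹ : ℝ) • K) ht
    (fun s hs => hhalf s ▸ hK (s / 2) ⟨by linarith [hs.1], by linarith [hs.1, hs.2]⟩) hL
    (hsum ▸ hKL)
  have hlie : ‖⁅(2⁻¹ : ℝ) • K, L⁆‖ = ‖K * L - L * K‖ / 2 := by
    rw [Ring.lie_def, smul_mul_assoc, mul_smul_comm, ← smul_sub, norm_smul]
    norm_num
    ring
  rw [hsum, hhalf, hlie, norm_smul] at h
  refine h.trans_eq ?_
  norm_num
  ring

/-- **Dissipative second-order Trotter–Suzuki product formula** (Lemma 4).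
If `K, L` are elements of a complex Banach algebra whose exponentials
`exp(sK)`, `exp(sL)`, `exp(s(K+L))` are contractions for all `s ∈ [0,t]`, and
`t·(‖L‖ + ‖K‖/2) ≤ 1`, then
`‖exp(t(K+L)) − exp((t/2)K)·exp(tL)·exp((t/2)K)‖ ≤ (t³/3)·‖[K,L]‖·(‖L‖ + ‖K‖/2)`. -/
theorem trotter_second_order_bound {A : Type*} [NormedRing A] [NormedAlgebra ℂ A]
    [CompleteSpace A] (K L : A) (t : ℝ) (ht : 0 ≤ t)
    (hK : ∀ s ∈ Set.Icc (0:ℝ) t, ‖exp (s • K)‖ ≤ 1)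
    (hL : ∀ s ∈ Set.Icc (0:ℝ) t, ‖exp (s • L)‖ ≤ 1)
    (hKL : ∀ s ∈ Set.Icc (0:ℝ) t, ‖exp (s • (K + L))‖ ≤ 1)
    (ht' : t * (‖L‖ + ‖K‖ / 2) ≤ 1) :
    ‖exp (t • (K + L)) - exp ((t / 2) • K) * exp (t • L) * exp ((t / 2) • K)‖ ≤
      t ^ 3 / 3 * ‖K * L - L * K‖ * (‖L‖ + ‖K‖ / 2) :=
  trotter_second_order_bound_general K L t ht hK hL hKL
end

section
/- Let A be a complex Banach algebra, let K, L ∈ A with a := ‖L‖ + ‖K‖/2 > 0, let t ≥ 0, and assume that ‖exp(sK)‖ ≤ 1, ‖exp(sL)‖ ≤ 1 and ‖exp(s(K+L))‖ ≤ 1 for all s ∈ [0,t]. Then ‖exp(t(K+L)) − exp((t/2)K)·exp(tL)·exp((t/2)K)‖ ≤ ((2(1 − e^{at}) + at(1 + e^{at}))/a²)·‖[K,L]‖. -/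
/-!
Write `M = K + L` and `S(s) = e^{sK/2} e^{sL} e^{sK/2}`. By Duhamel's principle
`s ↦ e^{(t-s)M} S(s)` has derivative `e^{(t-s)M} E(s)`, where `E = S' - M S`
(`strangDefect`) is a sum of the commutators `[e^{sL}, K]` and `[e^{sK/2}, L]`. Their
first-order parts cancel: sliding `K` through `e^{sL}` and `L` through `e^{sK/2}` writes `E(s)`
as the increment of a path (`strangDefectPath`) whose derivative at `u` is at most
`a u ‖[K, L]‖`, because moving an element `Y` past a contraction `e^{uX}` costs at most
`u ‖[X, Y]‖`. Hence `‖E(s)‖ ≤ a s² ‖[K, L]‖ / 2` and the Trotter error is at most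
`a t³ ‖[K, L]‖ / 6`, which lies below the stated bound since
`x³/6 ≤ 2(1 - eˣ) + x(1 + eˣ)` for `x ≥ 0`.
-/

open NormedSpace Set

theorem norm_sub_le_of_norm_hasDerivAt_le_pow {E : Type*} [NormedAddCommGroup E]
    [NormedSpace ℝ E] {f f' : ℝ → E} {c t : ℝ} (n : ℕ) (ht : 0 ≤ t)
    (hf : ∀ s ∈ Icc 0 t, HasDerivAt f (f' s) s)
    (hbound : ∀ s ∈ Ico 0 t, ‖f' s‖ ≤ c * s ^ n) :
    ‖f t - f 0‖ ≤ c * t ^ (n + 1) / (n + 1) := by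
  have hB (s : ℝ) : HasDerivAt (fun s => c * s ^ (n + 1) / (n + 1)) (c * s ^ n) s :=
    (((hasDerivAt_pow (n + 1) s).const_mul c).div_const ((n : ℝ) + 1)).congr_deriv
      (by push_cast; field_simp)
  exact image_norm_le_of_norm_deriv_right_le_deriv_boundary (f := fun s => f s - f 0)
    (fun s hs => (hf s hs).continuousAt.continuousWithinAt.sub continuousWithinAt_const)
    (fun s hs => ((hf s (Ico_subset_Icc_self hs)).sub_const _).hasDerivWithinAt)
    (by simp) hB hbound ⟨ht, le_rfl⟩

theorem apply_zero_le_of_hasDerivAt_nonneg {f f' : ℝ → ℝ} (hf : ∀ y, HasDerivAt f (f' y) y)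
    (hf' : ∀ y, 0 ≤ y → 0 ≤ f' y) {x : ℝ} (hx : 0 ≤ x) : f 0 ≤ f x :=
  monotoneOn_of_hasDerivWithinAt_nonneg (convex_Ici 0)
    (fun y _ => (hf y).continuousAt.continuousWithinAt) (fun y _ => (hf y).hasDerivWithinAt)
    (fun y hy => hf' y (interior_subset hy)) self_mem_Ici hx hx

theorem cube_div_six_le_two_mul_one_sub_exp_add_mul_one_add_exp (x : ℝ) (hx : 0 ≤ x) :
    x ^ 3 / 6 ≤ 2 * (1 - Real.exp x) + x * (1 + Real.exp x) := by
  have hd₁ (y : ℝ) : HasDerivAt (fun y => (y - 1) * Real.exp y + 1 - y ^ 2 / 2)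
      (y * (Real.exp y - 1)) y :=
    (((((hasDerivAt_id' y).sub_const 1).mul (Real.hasDerivAt_exp y)).add_const 1).sub
      ((hasDerivAt_pow 2 y).div_const 2)).congr_deriv (by norm_num; ring)
  have hd₂ (y : ℝ) : HasDerivAt (fun y => (y - 2) * Real.exp y + y + 2 - y ^ 3 / 6)
      ((y - 1) * Real.exp y + 1 - y ^ 2 / 2) y :=
    ((((((hasDerivAt_id' y).sub_const 2).mul (Real.hasDerivAt_exp y)).add
      (hasDerivAt_id' y)).add_const 2).sub ((hasDerivAt_pow 3 y).div_const 6)).congr_deriv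
      (by norm_num; ring)
  have h₁ (y : ℝ) (hy : 0 ≤ y) : 0 ≤ (y - 1) * Real.exp y + 1 - y ^ 2 / 2 := by
    simpa using apply_zero_le_of_hasDerivAt_nonneg hd₁
      (fun z hz => mul_nonneg hz (sub_nonneg.2 (Real.one_le_exp hz))) hy
  have h₂ := apply_zero_le_of_hasDerivAt_nonneg hd₂ h₁ hx
  simp only [Real.exp_zero] at h₂
  nlinarith

section BanachAlgebra

variable {A : Type*} [NormedRing A]

theorem norm_commutator_le (x y : A) : ‖x * y - y * x‖ ≤ 2 * ‖x‖ * ‖y‖ := by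
  calc ‖x * y - y * x‖ ≤ ‖x‖ * ‖y‖ + ‖y‖ * ‖x‖ :=
        (norm_sub_le _ _).trans (add_le_add (norm_mul_le _ _) (norm_mul_le _ _))
    _ = 2 * ‖x‖ * ‖y‖ := by ring

theorem norm_mul_mul_le_of_norm_le_one_s5 {p q : A} (x : A) (hp : ‖p‖ ≤ 1) (hq : ‖q‖ ≤ 1) :
    ‖p * x * q‖ ≤ ‖x‖ := by
  simpa using norm_mul_le_of_le (norm_mul_le_of_le hp le_rfl) hq

variable [NormedAlgebra ℝ A]

theorem mul_exp_smul_comm (x : A) (v : ℝ) : x * exp (v • x) = exp (v • x) * x :=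
  ((Commute.refl x).smul_right v).exp_right.eq

noncomputable def strangSplitting (K L : A) (s : ℝ) : A :=
  exp ((s / 2) • K) * exp (s • L) * exp ((s / 2) • K)

noncomputable def strangDefect (K L : A) (s : ℝ) : A :=
  (1 / 2 : ℝ) •
      (exp ((s / 2) • K) * (exp (s • L) * K - K * exp (s • L)) * exp ((s / 2) • K)) +
    (exp ((s / 2) • K) * L - L * exp ((s / 2) • K)) * exp (s • L) * exp ((s / 2) • K)

noncomputable def strangDefectPath (K L : A) (s u : ℝ) : A :=
  (1 / 2 : ℝ) •
      (exp ((s / 2) • K) * (exp (u • L) * K * exp ((s - u) • L)) * exp ((s / 2) • K)) -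
    exp (((s - u) / 2) • K) * L * exp ((u / 2) • K) * exp (s • L) * exp ((s / 2) • K)

theorem strangDefect_eq_strangDefectPath_sub (K L : A) (s : ℝ) :
    strangDefect K L s = strangDefectPath K L s s - strangDefectPath K L s 0 := by
  simp only [strangDefect, strangDefectPath, sub_self, sub_zero, zero_div, zero_smul, exp_zero,
    one_mul, mul_sub, sub_mul, mul_assoc]
  module

variable [CompleteSpace A]

theorem exp_add_smul (x : A) (v w : ℝ) : exp ((v + w) • x) = exp (v • x) * exp (w • x) := by
  let +nondep : NormedAlgebra ℚ A := .restrictScalars ℚ ℝ A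
  rw [add_smul]
  exact exp_add_of_commute (((Commute.refl x).smul_left v).smul_right w)

theorem HasDerivAt.exp_smul_const {f : ℝ → ℝ} {f' r : ℝ} (hf : HasDerivAt f f' r) (x : A) :
    HasDerivAt (fun u => NormedSpace.exp (f u • x))
      (f' • (NormedSpace.exp (f r • x) * x)) r :=
  (hasDerivAt_exp_smul_const x (f r)).scomp r hf

theorem HasDerivAt.exp_smul_const' {f : ℝ → ℝ} {f' r : ℝ} (hf : HasDerivAt f f' r) (x : A) :
    HasDerivAt (fun u => NormedSpace.exp (f u • x))
      (f' • (x * NormedSpace.exp (f r • x))) r :=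
  (hasDerivAt_exp_smul_const' x (f r)).scomp r hf

theorem hasDerivAt_exp_smul_mul_mul_exp_smul_s5 (x y : A) {f g : ℝ → ℝ} {c r : ℝ}
    (hf : HasDerivAt f c r) (hg : HasDerivAt g (-c) r) :
    HasDerivAt (fun u => exp (f u • x) * y * exp (g u • x))
      (c • (exp (f r • x) * (x * y - y * x) * exp (g r • x))) r :=
  (((hf.exp_smul_const x).mul_const y).mul (hg.exp_smul_const' x)).congr_deriv (by
    simp only [smul_mul_assoc, mul_smul_comm, mul_sub, sub_mul, mul_assoc]
    module)

theorem norm_exp_smul_mul_sub_mul_exp_smul_le_s5 (x y : A) {u : ℝ} (hu : 0 ≤ u)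
    (hx : ∀ v ∈ Icc (0 : ℝ) u, ‖exp (v • x)‖ ≤ 1) :
    ‖exp (u • x) * y - y * exp (u • x)‖ ≤ u * ‖x * y - y * x‖ := by
  have hslide (v : ℝ) := hasDerivAt_exp_smul_mul_mul_exp_smul_s5 x y (hasDerivAt_id' v)
    ((hasDerivAt_id' v).const_sub u)
  have hbound (v : ℝ) (hv : v ∈ Ico 0 u) :
      ‖(1 : ℝ) • (exp (v • x) * (x * y - y * x) * exp ((u - v) • x))‖ ≤
        ‖x * y - y * x‖ * v ^ 0 := by
    simpa using norm_mul_mul_le_of_norm_le_one_s5 _ (hx v (Ico_subset_Icc_self hv))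
      (hx (u - v) ⟨by linarith [hv.2], by linarith [hv.1]⟩)
  simpa [mul_comm] using
    norm_sub_le_of_norm_hasDerivAt_le_pow 0 hu (fun v _ => hslide v) hbound

theorem norm_mul_commutator_exp_smul_mul_le {p q : A} (x y : A) {u : ℝ} (hu : 0 ≤ u)
    (hx : ∀ v ∈ Icc (0 : ℝ) u, ‖exp (v • x)‖ ≤ 1) (hp : ‖p‖ ≤ 1) (hq : ‖q‖ ≤ 1) :
    ‖p * (exp (u • x) * y - y * exp (u • x)) * q‖ ≤ 2 * u * ‖x‖ * ‖y‖ :=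
  calc ‖p * (exp (u • x) * y - y * exp (u • x)) * q‖
      ≤ ‖exp (u • x) * y - y * exp (u • x)‖ := norm_mul_mul_le_of_norm_le_one_s5 _ hp hq
    _ ≤ u * ‖x * y - y * x‖ := norm_exp_smul_mul_sub_mul_exp_smul_le_s5 x y hu hx
    _ ≤ u * (2 * ‖x‖ * ‖y‖) := by gcongr; exact norm_commutator_le x y
    _ = 2 * u * ‖x‖ * ‖y‖ := by ring

theorem hasDerivAt_strangSplitting (K L : A) (s : ℝ) :
    HasDerivAt (strangSplitting K L)
      ((K + L) * strangSplitting K L s + strangDefect K L s) s := by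
  have hhalf := (hasDerivAt_id' s).div_const 2
  refine (((hhalf.exp_smul_const K).mul (hasDerivAt_exp_smul_const' L s)).mul
    (hhalf.exp_smul_const' K)).congr_deriv ?_
  -- `K` commutes with `exp ((s / 2) • K)`; the two passes move every `K` to its right.
  simp only [strangSplitting, strangDefect, Pi.mul_apply, smul_mul_assoc, mul_smul_comm, add_mul,
    sub_mul, mul_sub, mul_assoc, mul_exp_smul_comm K]
  simp only [← mul_assoc, mul_exp_smul_comm K]
  module

theorem hasDerivAt_strangDefectPath (K L : A) (s u : ℝ) :
    HasDerivAt (strangDefectPath K L s) ((1 / 2 : ℝ) •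
      (exp ((s / 2) • K) * (exp (u • L) * (L * K - K * L) * exp ((s - u) • L)) *
          exp ((s / 2) • K) -
        exp (((s - u) / 2) • K) * (L * K - K * L) * exp ((u / 2) • K) * exp (s • L) *
          exp ((s / 2) • K))) u := by
  have hslideL := hasDerivAt_exp_smul_mul_mul_exp_smul_s5 L K (hasDerivAt_id' u)
    ((hasDerivAt_id' u).const_sub s)
  have hslideK := hasDerivAt_exp_smul_mul_mul_exp_smul_s5 K L
    (((hasDerivAt_id' u).const_sub s).div_const 2)
    (((hasDerivAt_id' u).div_const 2).congr_deriv (by norm_num))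
  refine ((((hslideL.const_mul (exp ((s / 2) • K))).mul_const (exp ((s / 2) • K))).const_smul
    (1 / 2 : ℝ)).sub ((hslideK.mul_const (exp (s • L))).mul_const
      (exp ((s / 2) • K)))).congr_deriv ?_
  simp only [smul_mul_assoc, mul_smul_comm, mul_sub, sub_mul, mul_assoc]
  module

/-- Both terms are within `O(u)` of `exp ((s / 2) • K) * D * exp (s • L) * exp ((s / 2) • K)`:
the first moves `D` past `exp (u • L)`, the second past `exp ((u / 2) • K)`. -/
theorem norm_strangDefectPath_deriv_le (K L D : A) {s u : ℝ} (hu : 0 ≤ u) (hus : u ≤ s)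
    (hK : ∀ r ∈ Icc (0 : ℝ) s, ‖exp (r • K)‖ ≤ 1)
    (hL : ∀ r ∈ Icc (0 : ℝ) s, ‖exp (r • L)‖ ≤ 1) :
    ‖exp ((s / 2) • K) * (exp (u • L) * D * exp ((s - u) • L)) * exp ((s / 2) • K) -
        exp (((s - u) / 2) • K) * D * exp ((u / 2) • K) * exp (s • L) * exp ((s / 2) • K)‖ ≤
      (2 * ‖L‖ + ‖K‖) * ‖D‖ * u := by
  have hK' (r : ℝ) (h0 : 0 ≤ r) (hr : r ≤ s) : ‖exp (r • K)‖ ≤ 1 := hK r ⟨h0, hr⟩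
  have hL' (r : ℝ) (h0 : 0 ≤ r) (hr : r ≤ s) : ‖exp (r • L)‖ ≤ 1 := hL r ⟨h0, hr⟩
  have hLterm := norm_mul_commutator_exp_smul_mul_le (p := exp ((s / 2) • K))
    (q := exp ((s - u) • L) * exp ((s / 2) • K)) L D hu
    (fun v hv => hL' v hv.1 (hv.2.trans hus)) (hK' _ (by linarith) (by linarith))
    ((norm_mul_le_of_le (hL' _ (by linarith) (by linarith))
      (hK' _ (by linarith) (by linarith))).trans_eq (one_mul 1))
  have hKterm := norm_mul_commutator_exp_smul_mul_le (p := exp (((s - u) / 2) • K))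
    (q := exp (s • L) * exp ((s / 2) • K)) K D (by linarith : 0 ≤ u / 2)
    (fun v hv => hK' v hv.1 (by linarith [hv.2])) (hK' _ (by linarith) (by linarith))
    ((norm_mul_le_of_le (hL' _ (by linarith) le_rfl)
      (hK' _ (by linarith) (by linarith))).trans_eq (one_mul 1))
  have hsplitL : exp (u • L) * exp ((s - u) • L) = exp (s • L) := by
    rw [← exp_add_smul, add_sub_cancel]
  have hsplitK : exp (((s - u) / 2) • K) * exp ((u / 2) • K) = exp ((s / 2) • K) := by
    rw [← exp_add_smul, ← add_div, sub_add_cancel]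
  set a := exp (u • L)
  set b := exp ((s - u) • L)
  set c := exp (((s - u) / 2) • K)
  set d := exp ((u / 2) • K)
  set eL := exp (s • L)
  set eK := exp ((s / 2) • K)
  have hsum : eK * (a * D - D * a) * (b * eK) + c * (d * D - D * d) * (eL * eK) =
      eK * (a * D * b) * eK - c * D * d * eL * eK := by
    rw [show eK * (a * D - D * a) * (b * eK) + c * (d * D - D * d) * (eL * eK) =
        eK * (a * D * b) * eK - c * D * d * eL * eK +
          (c * d * D * (eL * eK) - eK * D * (a * b * eK)) by noncomm_ring,
      hsplitL, hsplitK, sub_self, add_zero]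
  calc _ = ‖eK * (a * D - D * a) * (b * eK) + c * (d * D - D * d) * (eL * eK)‖ := by
        rw [hsum]
    _ ≤ 2 * u * ‖L‖ * ‖D‖ + 2 * (u / 2) * ‖K‖ * ‖D‖ := norm_add_le_of_le hLterm hKterm
    _ = (2 * ‖L‖ + ‖K‖) * ‖D‖ * u := by ring

theorem norm_strangDefect_le (K L : A) {s : ℝ} (hs : 0 ≤ s)
    (hK : ∀ r ∈ Icc (0 : ℝ) s, ‖exp (r • K)‖ ≤ 1)
    (hL : ∀ r ∈ Icc (0 : ℝ) s, ‖exp (r • L)‖ ≤ 1) :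
    ‖strangDefect K L s‖ ≤ (‖L‖ + ‖K‖ / 2) * ‖K * L - L * K‖ * s ^ 2 / 2 := by
  have hbound (u : ℝ) (hu : u ∈ Ico 0 s) : ‖(1 / 2 : ℝ) •
      (exp ((s / 2) • K) * (exp (u • L) * (L * K - K * L) * exp ((s - u) • L)) *
          exp ((s / 2) • K) -
        exp (((s - u) / 2) • K) * (L * K - K * L) * exp ((u / 2) • K) * exp (s • L) *
          exp ((s / 2) • K))‖ ≤ (‖L‖ + ‖K‖ / 2) * ‖K * L - L * K‖ * u ^ 1 := by
    rw [norm_smul, Real.norm_of_nonneg (by norm_num), pow_one, norm_sub_rev (K * L)]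
    linarith [norm_strangDefectPath_deriv_le K L (L * K - K * L) hu.1 hu.2.le hK hL]
  rw [strangDefect_eq_strangDefectPath_sub]
  convert norm_sub_le_of_norm_hasDerivAt_le_pow 1 hs
    (fun u _ => hasDerivAt_strangDefectPath K L s u) hbound using 1
  norm_num

theorem norm_exp_sub_strangSplitting_le (K L : A) {t : ℝ} (ht : 0 ≤ t)
    (hK : ∀ s ∈ Icc (0 : ℝ) t, ‖exp (s • K)‖ ≤ 1)
    (hL : ∀ s ∈ Icc (0 : ℝ) t, ‖exp (s • L)‖ ≤ 1)
    (hKL : ∀ s ∈ Icc (0 : ℝ) t, ‖exp (s • (K + L))‖ ≤ 1) :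
    ‖exp (t • (K + L)) - strangSplitting K L t‖ ≤
      (‖L‖ + ‖K‖ / 2) * ‖K * L - L * K‖ * t ^ 3 / 6 := by
  let G : ℝ → A := fun s => exp ((t - s) • (K + L)) * strangSplitting K L s
  have hG (s : ℝ) : HasDerivAt G (exp ((t - s) • (K + L)) * strangDefect K L s) s :=
    ((((hasDerivAt_id' s).const_sub t).exp_smul_const (K + L)).mul
      (hasDerivAt_strangSplitting K L s)).congr_deriv (by
        simp only [smul_mul_assoc, mul_add, add_mul, mul_assoc]
        module)
  have hbound : ∀ s ∈ Ico 0 t, ‖exp ((t - s) • (K + L)) * strangDefect K L s‖ ≤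
      ((‖L‖ + ‖K‖ / 2) * ‖K * L - L * K‖ / 2) * s ^ 2 := by
    intro s hs
    have hst : Icc 0 s ⊆ Icc 0 t := Icc_subset_Icc_right hs.2.le
    calc _ ≤ 1 * ((‖L‖ + ‖K‖ / 2) * ‖K * L - L * K‖ * s ^ 2 / 2) :=
          norm_mul_le_of_le (hKL _ ⟨by linarith [hs.2], by linarith [hs.1]⟩)
            (norm_strangDefect_le K L hs.1 (fun r hr => hK r (hst hr))
              (fun r hr => hL r (hst hr)))
      _ = _ := by ring
  have hGt : G t = strangSplitting K L t := by simp [G]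
  have hG0 : G 0 = exp (t • (K + L)) := by simp [G, strangSplitting]
  rw [← hGt, ← hG0, norm_sub_rev]
  convert norm_sub_le_of_norm_hasDerivAt_le_pow 2 ht (fun s _ => hG s) hbound using 1
  ring

end BanachAlgebra

/-- **Intermediate second-order Trotter–Suzuki bound** (proof of Lemma 4).
If `K, L` are elements of a complex Banach algebra with `a := ‖L‖ + ‖K‖/2 > 0`
whose exponentials `exp(sK)`, `exp(sL)`, `exp(s(K+L))` are contractions for all
`s ∈ [0,t]`, then
`‖exp(t(K+L)) − exp((t/2)K)·exp(tL)·exp((t/2)K)‖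
  ≤ ((2(1 − e^{at}) + at(1 + e^{at}))/a²)·‖[K,L]‖`. -/
theorem trotter_second_order_intermediate_bound {A : Type*} [NormedRing A]
    [NormedAlgebra ℂ A] [CompleteSpace A] (K L : A) (a : ℝ)
    (ha : a = ‖L‖ + ‖K‖ / 2) (ha' : 0 < a) (t : ℝ) (ht : 0 ≤ t)
    (hK : ∀ s ∈ Set.Icc (0:ℝ) t, ‖exp (s • K)‖ ≤ 1)
    (hL : ∀ s ∈ Set.Icc (0:ℝ) t, ‖exp (s • L)‖ ≤ 1)
    (hKL : ∀ s ∈ Set.Icc (0:ℝ) t, ‖exp (s • (K + L))‖ ≤ 1) :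
    ‖exp (t • (K + L)) - exp ((t / 2) • K) * exp (t • L) * exp ((t / 2) • K)‖ ≤
      (2 * (1 - Real.exp (a * t)) + a * t * (1 + Real.exp (a * t))) / a ^ 2 *
        ‖K * L - L * K‖ := by
  calc ‖exp (t • (K + L)) - strangSplitting K L t‖
      ≤ a * ‖K * L - L * K‖ * t ^ 3 / 6 :=
        ha ▸ norm_exp_sub_strangSplitting_le K L ht hK hL hKL
    _ = (a * t) ^ 3 / 6 / a ^ 2 * ‖K * L - L * K‖ := by field_simp
    _ ≤ _ := by
      gcongr
      exact cube_div_six_le_two_mul_one_sub_exp_add_mul_one_add_exp _ (mul_nonneg ha'.le ht)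
end

section
/- Let X and Y be d×K complex matrices such that ρ := XX† and σ := YY† both have trace 1. Then the fidelity satisfies F(ρ,σ) ≥ (2 − ‖X − Y‖₂²)/2, i.e. F(ρ,σ) ≥ 1 − ‖X − Y‖₂²/2. -/
open scoped Matrix ComplexOrder

open scoped Classical in
/-- The positive semidefinite square root of a matrix: the PSD square root if the
matrix is positive semidefinite, and `0` otherwise (junk value). -/
noncomputable def psdSqrt {n : Type*} [Fintype n] [DecidableEq n]
    (M : Matrix n n ℂ) : Matrix n n ℂ :=
  if h : M.PosSemidef then
    (h.1.eigenvectorUnitary : Matrix n n ℂ) *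
      Matrix.diagonal ((↑) ∘ (Real.sqrt ·) ∘ h.1.eigenvalues) *
      (star h.1.eigenvectorUnitary : Matrix n n ℂ)
  else 0

/-- The fidelity `F(ρ,σ) := Tr((√σ ρ √σ)^{1/2})` of two (positive semidefinite)
matrices, as a real number. -/
noncomputable def fidelity {n : Type*} [Fintype n] [DecidableEq n]
    (ρ σ : Matrix n n ℂ) : ℝ :=
  (Matrix.trace (psdSqrt (psdSqrt σ * ρ * psdSqrt σ))).re

/-- The trace norm `‖M‖₁ := Tr((M†M)^{1/2})` of a complex matrix. -/
noncomputable def traceNorm {m n : Type*} [Fintype m] [Fintype n] [DecidableEq n]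
    (M : Matrix m n ℂ) : ℝ :=
  (Matrix.trace (psdSqrt (Mᴴ * M))).re

/-- The Frobenius norm `‖M‖₂ := (Tr(M†M))^{1/2}` of a complex matrix. -/
noncomputable def frobeniusNorm' {m n : Type*} [Fintype m] [Fintype n]
    (M : Matrix m n ℂ) : ℝ :=
  Real.sqrt (Matrix.trace (Mᴴ * M)).re

/-!
With `S := √σ` and `A := S X`, the fidelity is `Tr √(A A†)`. Since `σ = Y Y†`, the purification
factors as `Y = S W` through a contraction (`W W† ≤ 1`, namely `W = S⁺ Y`), so
`Tr(X† Y) = Tr(A† W)`. For a contraction `W`, `Re Tr(A† W) ≤ Tr √(A A†)`: writing `A = G R` with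
`G = (A A†)^{1/4}` and `R R† = √(A A†)`, the AM–GM form of Cauchy–Schwarz bounds
`2 Re Tr(R† (G W))` by `Tr(R† R) + Tr(W† G² W) ≤ 2 Tr √(A A†)`. Finally
`‖X - Y‖₂² = 2 - 2 Re Tr(X† Y)` because both traces are `1`.
-/

open Matrix

open scoped MatrixOrder

lemma psdSqrt_eq_cfc {n : Type*} [Fintype n] [DecidableEq n] {M : Matrix n n ℂ}
    (hM : M.PosSemidef) : psdSqrt M = cfc Real.sqrt M := by
  rw [psdSqrt, dif_pos hM, hM.1.cfc_eq]
  rfl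

lemma frobeniusNorm'_sq {m n : Type*} [Fintype m] [Fintype n] (M : Matrix m n ℂ) :
    frobeniusNorm' M ^ 2 = (trace (Mᴴ * M)).re :=
  Real.sq_sqrt (Complex.nonneg_iff.1 (posSemidef_conjTranspose_mul_self M).trace_nonneg).1

namespace Matrix

variable {m k : Type*} [Fintype m] [Fintype k]

lemma re_trace_sub_conjTranspose_mul_sub (B C : Matrix m k ℂ) :
    (trace ((B - C)ᴴ * (B - C))).re =
      (trace (Bᴴ * B)).re + (trace (Cᴴ * C)).re - 2 * (trace (Bᴴ * C)).re := by
  have hCB : trace (Cᴴ * B) = star (trace (Bᴴ * C)) := by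
    rw [← trace_conjTranspose, conjTranspose_mul, conjTranspose_conjTranspose]
  simp only [conjTranspose_sub, Matrix.sub_mul, Matrix.mul_sub, trace_sub, Complex.sub_re, hCB,
    Complex.star_def, Complex.conj_re]
  ring

lemma two_mul_re_trace_conjTranspose_mul_le (B C : Matrix m k ℂ) :
    2 * (trace (Bᴴ * C)).re ≤ (trace (Bᴴ * B)).re + (trace (Cᴴ * C)).re := by
  have := (posSemidef_conjTranspose_mul_self (B - C)).trace_nonneg
  rw [Complex.nonneg_iff, re_trace_sub_conjTranspose_mul_sub] at this
  linarith [this.1]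

lemma trace_le_trace {A B : Matrix m m ℂ} (h : A ≤ B) : trace A ≤ trace B := by
  simpa [trace_sub] using (le_iff.1 h).trace_nonneg

variable [DecidableEq m]

lemma continuousOn_spectrum (f : ℝ → ℝ) (M : Matrix m m ℂ) : ContinuousOn f (spectrum ℝ M) :=
  M.finite_real_spectrum.continuousOn f

lemma conjTranspose_cfc (f : ℝ → ℝ) (M : Matrix m m ℂ) : (cfc f M)ᴴ = cfc f M :=
  IsSelfAdjoint.cfc

lemma cfc_mul_self_mul_cfc (f g : ℝ → ℝ) {M : Matrix m m ℂ} (hM : M.IsHermitian) :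
    cfc f M * M * cfc g M = cfc (fun x ↦ f x * x * g x) M := by
  rw [cfc_mul (fun x ↦ f x * x) g M (continuousOn_spectrum _ _) (continuousOn_spectrum _ _),
    cfc_mul f (fun x ↦ x) M (continuousOn_spectrum _ _) (continuousOn_spectrum _ _),
    cfc_id' ℝ M hM.isSelfAdjoint]

-- The range of `B` is the support of `B * Bᴴ`, on which `h` is `1`.
lemma cfc_self_mul_conjTranspose_mul_eq_self (B : Matrix m k ℂ) {h : ℝ → ℝ}
    (hh : ∀ x, 0 < x → h x = 1) : cfc h (B * Bᴴ) * B = B := by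
  set M := B * Bᴴ
  have hM : M.PosSemidef := posSemidef_self_mul_conjTranspose B
  have hQ : cfc (fun x ↦ 1 - h x) M = 1 - cfc h M := by
    rw [cfc_sub _ _ _ (continuousOn_spectrum _ _) (continuousOn_spectrum _ _),
      cfc_const_one ℝ M hM.1.isSelfAdjoint]
  have hQM : (1 - cfc h M) * M * (1 - cfc h M) = 0 := by
    rw [← hQ, cfc_mul_self_mul_cfc _ _ hM.1]
    refine (cfc_congr fun x hx ↦ ?_).trans (cfc_const_zero ℝ M)
    rcases (spectrum_nonneg_of_nonneg hM.nonneg hx).eq_or_lt with rfl | hx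
    · simp
    · simp [hh x hx]
  have hQB : (1 - cfc h M) * B = 0 := by
    rw [← self_mul_conjTranspose_eq_zero, conjTranspose_mul, ← hQ, conjTranspose_cfc, hQ,
      ← Matrix.mul_assoc, Matrix.mul_assoc _ B]
    exact hQM
  rwa [Matrix.sub_mul, Matrix.one_mul, sub_eq_zero, eq_comm] at hQB

-- The factor is `R = f⁺(B * Bᴴ) * B`, where `f⁺ = f⁻¹` pointwise (so `0` where `f` vanishes).
lemma exists_eq_cfc_self_mul_conjTranspose_mul (B : Matrix m k ℂ) {f : ℝ → ℝ}
    (hf : ∀ x, 0 < x → f x ≠ 0) :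
    ∃ R : Matrix m k ℂ, B = cfc f (B * Bᴴ) * R ∧
      R * Rᴴ = cfc (fun x ↦ x / f x ^ 2) (B * Bᴴ) := by
  refine ⟨cfc (fun x ↦ (f x)⁻¹) (B * Bᴴ) * B, ?_, ?_⟩
  · rw [← Matrix.mul_assoc, ← cfc_mul _ _ _ (continuousOn_spectrum _ _)
      (continuousOn_spectrum _ _),
      cfc_self_mul_conjTranspose_mul_eq_self B fun x hx ↦ mul_inv_cancel₀ (hf x hx)]
  · rw [conjTranspose_mul, conjTranspose_cfc, ← Matrix.mul_assoc, Matrix.mul_assoc (cfc _ _) B,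
      cfc_mul_self_mul_cfc _ _ (isHermitian_mul_conjTranspose_self B)]
    congr 1
    ext x
    ring

lemma exists_eq_cfc_sqrt_mul_and_mul_conjTranspose_le_one (B : Matrix m k ℂ) :
    ∃ W : Matrix m k ℂ, B = cfc Real.sqrt (B * Bᴴ) * W ∧ W * Wᴴ ≤ 1 := by
  obtain ⟨W, hBW, hW⟩ :=
    exists_eq_cfc_self_mul_conjTranspose_mul B fun x hx ↦ (Real.sqrt_pos.2 hx).ne'
  refine ⟨W, hBW, hW ▸ cfc_le_one _ _ fun x _ ↦ ?_⟩
  rcases le_or_gt x 0 with hx | hx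
  · simp [Real.sqrt_eq_zero'.2 hx]
  · rw [Real.sq_sqrt hx.le, div_self hx.ne']

lemma re_trace_conjTranspose_mul_le_of_mul_conjTranspose_le_one (A W : Matrix m k ℂ)
    (hW : W * Wᴴ ≤ 1) : (trace (Aᴴ * W)).re ≤ (trace (cfc Real.sqrt (A * Aᴴ))).re := by
  set H := cfc Real.sqrt (A * Aᴴ)
  set G := cfc (fun x ↦ √√x) (A * Aᴴ)
  obtain ⟨R, hAR, hR⟩ :=
    exists_eq_cfc_self_mul_conjTranspose_mul A (f := fun x ↦ √√x) fun x hx ↦ by positivity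
  have hGG : G * G = H := by
    rw [← cfc_mul _ _ _ (continuousOn_spectrum _ _) (continuousOn_spectrum _ _)]
    congr 1
    ext x
    exact Real.mul_self_sqrt (Real.sqrt_nonneg x)
  have hRR : trace (Rᴴ * R) = trace H := by
    rw [trace_mul_comm, hR]
    congr 2
    ext x
    rw [Real.sq_sqrt (Real.sqrt_nonneg x), Real.div_sqrt]
  have hGW : trace ((G * W)ᴴ * (G * W)) ≤ trace H := by
    rw [conjTranspose_mul, conjTranspose_cfc, trace_mul_comm, Matrix.mul_assoc,
      ← Matrix.mul_assoc W, ← Matrix.mul_assoc, ← hGG]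
    have hG : star G = G := IsSelfAdjoint.cfc
    simpa only [hG, Matrix.mul_one] using trace_le_trace (star_left_conjugate_le_conjugate hW G)
  have hAW : Aᴴ * W = Rᴴ * (G * W) := by
    rw [hAR, conjTranspose_mul, conjTranspose_cfc, Matrix.mul_assoc]
  have hAMGM := two_mul_re_trace_conjTranspose_mul_le R (G * W)
  rw [hRR] at hAMGM
  rw [hAW]
  linarith [Complex.re_le_re hGW]

end Matrix

lemma re_trace_conjTranspose_mul_le_fidelity {m k : Type*} [Fintype m] [Fintype k]
    [DecidableEq m] (X Y : Matrix m k ℂ) : (trace (Xᴴ * Y)).re ≤ fidelity (X * Xᴴ) (Y * Yᴴ) := by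
  obtain ⟨W, hYW, hW⟩ := exists_eq_cfc_sqrt_mul_and_mul_conjTranspose_le_one Y
  set S := cfc Real.sqrt (Y * Yᴴ)
  have hS : Sᴴ = S := conjTranspose_cfc _ _
  have hρ : S * (X * Xᴴ) * S = S * X * (S * X)ᴴ := by
    rw [conjTranspose_mul, hS]
    simp only [Matrix.mul_assoc]
  have hXY : Xᴴ * Y = (S * X)ᴴ * W := by
    rw [hYW, conjTranspose_mul, hS, Matrix.mul_assoc]
  rw [fidelity, psdSqrt_eq_cfc (posSemidef_self_mul_conjTranspose Y), hρ,
    psdSqrt_eq_cfc (posSemidef_self_mul_conjTranspose _), hXY]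
  exact re_trace_conjTranspose_mul_le_of_mul_conjTranspose_le_one (S * X) W hW

/-- **Fidelity bound of Lemma 1.** If `X, Y` are `d × K` complex matrices such
that `ρ := XX†` and `σ := YY†` both have trace `1`, then
`F(ρ,σ) ≥ 1 − ‖X − Y‖₂²/2`. -/
theorem fidelity_ge_of_purifications {d K : ℕ} (X Y : Matrix (Fin d) (Fin K) ℂ)
    (hX : Matrix.trace (X * Xᴴ) = 1) (hY : Matrix.trace (Y * Yᴴ) = 1) :
    fidelity (X * Xᴴ) (Y * Yᴴ) ≥ 1 - frobeniusNorm' (X - Y) ^ 2 / 2 := by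
  have hXX : (trace (Xᴴ * X)).re = 1 := by rw [trace_mul_comm, hX, Complex.one_re]
  have hYY : (trace (Yᴴ * Y)).re = 1 := by rw [trace_mul_comm, hY, Complex.one_re]
  rw [frobeniusNorm'_sq, re_trace_sub_conjTranspose_mul_sub, hXX, hYY]
  linarith [re_trace_conjTranspose_mul_le_fidelity X Y]
end
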